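/- A map f : ℤ_2 → ℤ_2 is a 1-Lipschitz function that is bijective modulo 2^k for every k ≥ 1 (i.e., a measure-preserving T-function) if and only if there exist d ∈ ℤ_2 and a 1-Lipschitz function g : ℤ_2 → ℤ_2 such that f(x) = d + x + 2·g(x) for all x ∈ ℤ_2. -/

import Mathlib

/-!
A 1-Lipschitz map `f` of `ℤ_2` is bijective modulo every `2^k` iff it is injective modulo every
`2^k`, i.e. iff it is an isometry: `‖f a - f b‖ = ‖a - b‖`. Since `1` is the only unit of
`𝔽_2`, two 2-adic integers of equal norm `2^-n` are congruent modulo `2^(n+1)`; so `f` is an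
isometry iff `x ↦ f x - x` contracts distances by the factor `‖2‖ = 1/2`, i.e. iff
`f x - x = d + 2 g(x)` with `g` 1-Lipschitz.
-/

/-- The map induced by `f : ℤ_[2] → ℤ_[2]` on `ℤ/2^kℤ` (for 1-Lipschitz `f` this is the
well-defined reduction of `f` modulo `2^k`). -/
noncomputable def inducedMod (f : ℤ_[2] → ℤ_[2]) (k : ℕ) : ZMod (2 ^ k) → ZMod (2 ^ k) :=
  fun z => PadicInt.toZModPow k (f ((z.val : ℤ_[2])))

namespace PadicInt

variable {p : ℕ} [Fact p.Prime]

theorem toZModPow_eq_iff_norm_sub_le (k : ℕ) (x y : ℤ_[p]) :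
    toZModPow k x = toZModPow k y ↔ ‖x - y‖ ≤ (p : ℝ) ^ (-k : ℤ) := by
  rw [← sub_eq_zero, ← map_sub, ← RingHom.mem_ker, ker_toZModPow, norm_le_pow_iff_mem_span_pow]

theorem toZModPow_natCast_val (k : ℕ) (z : ZMod (p ^ k)) : toZModPow k (z.val : ℤ_[p]) = z := by
  have : NeZero (p ^ k) := ⟨pow_ne_zero k (Fact.out : p.Prime).ne_zero⟩
  rw [map_natCast, ZMod.natCast_zmod_val]

theorem exists_eq_add_mul_of_norm_sub_le_iff (e : ℤ_[p] → ℤ_[p]) :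
    (∀ a b, ‖e a - e b‖ ≤ ‖(p : ℤ_[p])‖ * ‖a - b‖) ↔
      ∃ (d : ℤ_[p]) (g : ℤ_[p] → ℤ_[p]), (∀ a b, ‖g a - g b‖ ≤ ‖a - b‖) ∧
        ∀ x, e x = d + p * g x := by
  constructor
  · intro he
    have hdvd : ∀ x, (p : ℤ_[p]) ∣ e x - e 0 := fun x => by
      rw [← norm_lt_one_iff_dvd]
      calc ‖e x - e 0‖ ≤ ‖(p : ℤ_[p])‖ * ‖x - 0‖ := he x 0
        _ ≤ ‖(p : ℤ_[p])‖ * 1 := by gcongr; exact norm_le_one _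
        _ < 1 := by
          rw [mul_one, norm_p]
          exact inv_lt_one_of_one_lt₀ (mod_cast (Fact.out : p.Prime).one_lt)
    choose g hg using hdvd
    refine ⟨e 0, g, fun a b => ?_, fun x => by rw [← hg, add_sub_cancel]⟩
    have hp : 0 < ‖(p : ℤ_[p])‖ := norm_pos_iff.2 (mod_cast (Fact.out : p.Prime).ne_zero)
    refine le_of_mul_le_mul_left (a := ‖(p : ℤ_[p])‖) ?_ hp
    rw [← norm_mul, mul_sub, ← hg, ← hg, sub_sub_sub_cancel_right]
    exact he a b
  · rintro ⟨d, g, hg, he⟩ a b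
    rw [he, he, add_sub_add_left_eq_sub, ← mul_sub, norm_mul]
    gcongr
    exact hg a b

theorem norm_sub_lt_one_of_norm_eq_one {u v : ℤ_[2]} (hu : ‖u‖ = 1) (hv : ‖v‖ = 1) :
    ‖u - v‖ < 1 := by
  have hunit : ∀ a : ZMod 2, a ≠ 0 → a = 1 := by decide
  have hres : ∀ {w : ℤ_[2]}, ‖w‖ = 1 → toZMod w = 1 := fun hw =>
    hunit _ ((isUnit_iff.2 hw).map toZMod).ne_zero
  rw [← not_isUnit_iff, ← mem_nonunits_iff, ← IsLocalRing.mem_maximalIdeal, ← ker_toZMod,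
    RingHom.mem_ker, map_sub, hres hu, hres hv, sub_self]

theorem norm_eq_iff_norm_sub_le {x y : ℤ_[2]} : ‖x‖ = ‖y‖ ↔ ‖x - y‖ ≤ ‖(2 : ℤ_[2])‖ * ‖y‖ := by
  have hnorm_two : ‖(2 : ℤ_[2])‖ = 2⁻¹ := by exact_mod_cast norm_p (p := 2)
  rcases eq_or_ne y 0 with rfl | hy
  · simp
  constructor
  · intro h
    have hx : x ≠ 0 := norm_ne_zero_iff.1 (h ▸ norm_ne_zero_iff.2 hy)
    have hval : x.valuation = y.valuation := by
      rw [norm_eq_zpow_neg_valuation hx, norm_eq_zpow_neg_valuation hy] at h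
      exact_mod_cast neg_inj.1 (zpow_right_injective₀ (by norm_num) (by norm_num) h)
    have hu := norm_units (unitCoeff hx)
    have hv := norm_units (unitCoeff hy)
    rw [unitCoeff_spec hx, unitCoeff_spec hy, hval, ← sub_mul, norm_mul, norm_mul, hv, one_mul,
      hnorm_two]
    gcongr
    have hlt := norm_sub_lt_one_of_norm_eq_one hu hv
    rw [← zpow_zero ((2 : ℕ) : ℝ), norm_lt_pow_iff_norm_le_pow_sub_one] at hlt
    simpa using hlt
  · intro h
    have hlt : ‖x + -y‖ < ‖-y‖ := by
      rw [← sub_eq_add_neg, norm_neg]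
      refine h.trans_lt ?_
      rw [hnorm_two]
      have := norm_pos_iff.2 hy
      linarith
    rw [norm_eq_of_norm_add_lt_right hlt, norm_neg]

end PadicInt

open PadicInt

section inducedMod

variable {f : ℤ_[2] → ℤ_[2]} (hf : ∀ a b : ℤ_[2], ‖f a - f b‖ ≤ ‖a - b‖)
include hf

theorem inducedMod_toZModPow (k : ℕ) (a : ℤ_[2]) :
    inducedMod f k (toZModPow k a) = toZModPow k (f a) := by
  rw [inducedMod, toZModPow_eq_iff_norm_sub_le]
  refine (hf _ _).trans ((toZModPow_eq_iff_norm_sub_le k _ _).1 ?_)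
  exact toZModPow_natCast_val k _

theorem bijective_inducedMod_iff (k : ℕ) :
    Function.Bijective (inducedMod f k) ↔
      ∀ a b, ‖f a - f b‖ ≤ (2 : ℝ) ^ (-k : ℤ) → ‖a - b‖ ≤ (2 : ℝ) ^ (-k : ℤ) := by
  have : NeZero (2 ^ k) := ⟨by positivity⟩
  have hmod := toZModPow_eq_iff_norm_sub_le (p := 2) k
  rw [← Finite.injective_iff_bijective]
  push_cast at hmod
  constructor
  · intro hinj a b hfab
    rw [← hmod, ← inducedMod_toZModPow hf, ← inducedMod_toZModPow hf] at hfab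
    exact (hmod a b).1 (hinj hfab)
  · intro h z w hzw
    rw [← toZModPow_natCast_val k z, ← toZModPow_natCast_val k w] at hzw ⊢
    rw [inducedMod_toZModPow hf, inducedMod_toZModPow hf, hmod] at hzw
    exact (hmod _ _).2 (h _ _ hzw)

theorem forall_bijective_inducedMod_iff :
    (∀ k, 1 ≤ k → Function.Bijective (inducedMod f k)) ↔ ∀ a b, ‖f a - f b‖ = ‖a - b‖ := by
  refine ⟨fun hbij a b => (hf a b).antisymm (not_lt.1 fun hlt => ?_), fun hiso k _ => ?_⟩
  · have hab : a - b ≠ 0 := norm_pos_iff.1 ((norm_nonneg _).trans_lt hlt)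
    set n := (a - b).valuation
    have hfab : ‖f a - f b‖ ≤ (2 : ℝ) ^ (-(n + 1 : ℕ) : ℤ) := by
      rw [norm_eq_zpow_neg_valuation hab, norm_lt_pow_iff_norm_le_pow_sub_one] at hlt
      push_cast at hlt ⊢
      rwa [neg_add']
    have := (bijective_inducedMod_iff hf (n + 1)).1 (hbij _ n.succ_pos) a b hfab
    have := (norm_le_pow_iff_le_valuation (p := 2) _ hab (n + 1)).1 (mod_cast this)
    omega
  · exact (bijective_inducedMod_iff hf k).2 fun a b => (hiso a b).symm ▸ id

end inducedMod

/-- A map `f : ℤ_2 → ℤ_2` is a measure-preserving T-function (a 1-Lipschitz function that is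
bijective modulo `2^k` for every `k ≥ 1`) if and only if `f x = d + x + 2·g(x)` for a suitable
`d ∈ ℤ_2` and a suitable 1-Lipschitz function `g : ℤ_2 → ℤ_2`. -/
theorem measure_preserving_iff_d_plus_x_plus_2g
    (f : ℤ_[2] → ℤ_[2]) :
    ((∀ a b : ℤ_[2], ‖f a - f b‖ ≤ ‖a - b‖) ∧
        ∀ k : ℕ, 1 ≤ k → Function.Bijective (inducedMod f k)) ↔
      ∃ (d : ℤ_[2]) (g : ℤ_[2] → ℤ_[2]), (∀ a b : ℤ_[2], ‖g a - g b‖ ≤ ‖a - b‖) ∧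
        ∀ x : ℤ_[2], f x = d + x + 2 * g x := by
  calc _ ↔ ∀ a b, ‖f a - f b‖ = ‖a - b‖ :=
        ⟨fun ⟨hf, hbij⟩ => (forall_bijective_inducedMod_iff hf).1 hbij,
          fun hiso => have hf a b := (hiso a b).le
            ⟨hf, (forall_bijective_inducedMod_iff hf).2 hiso⟩⟩
    _ ↔ ∀ a b, ‖(f a - a) - (f b - b)‖ ≤ ‖((2 : ℕ) : ℤ_[2])‖ * ‖a - b‖ := by
        simp only [norm_eq_iff_norm_sub_le, sub_sub_sub_comm, Nat.cast_ofNat]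
    _ ↔ _ := by
        rw [exists_eq_add_mul_of_norm_sub_le_iff (fun x => f x - x)]
        simp only [sub_eq_iff_eq_add, Nat.cast_ofNat]
        exact exists₂_congr fun d g => and_congr_right' <| forall_congr' fun x => by
          rw [add_right_comm]
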